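/- Assume w is exponentially bounded. If the density of the second species is bounded on D_mu, i.e. there exists C >= 0 such that R_2(mu) <= C for all mu in D_mu, then D_mu is bounded in the second coordinate: the set {mu_2 : (mu_1, mu_2) in D_mu for some mu_1} is bounded above. Equivalently, if D_mu is unbounded in the mu_2 direction, then sup over mu in D_mu of R_2(mu) = infinity. The analogous statement holds with the roles of the two coordinates interchanged. -/

import Mathlib

open Real Set Filter Topology

noncomputable section

/-- Euclidean norm `|k|` of a pair of naturals. -/
def knorm (k : ℕ × ℕ) : ℝ := Real.sqrt ((k.1 : ℝ) ^ 2 + (k.2 : ℝ) ^ 2)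

/-- Dot product `μ·k` of a chemical potential with an occupation vector. -/
def dotNat (μ : ℝ × ℝ) (k : ℕ × ℕ) : ℝ := μ.1 * k.1 + μ.2 * k.2

/-- Summand `w(k) exp(μ·k)` of the grand-canonical partition function. -/
def zsummand (w : ℕ × ℕ → ℝ) (μ : ℝ × ℝ) (k : ℕ × ℕ) : ℝ := w k * Real.exp (dotNat μ k)

/-- `dom z`: the set of `μ` where `z(μ) = ∑_k w(k) exp(μ·k)` is finite. -/
def domz (w : ℕ × ℕ → ℝ) : Set (ℝ × ℝ) := {μ | Summable (zsummand w μ)}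

/-- `D_μ`: the set of `μ` where `∑_k k_i w(k) exp(μ·k)` is finite for `i = 1,2`. -/
def Dmu (w : ℕ × ℕ → ℝ) : Set (ℝ × ℝ) :=
  {μ | Summable (fun k : ℕ × ℕ => (k.1 : ℝ) * zsummand w μ k) ∧
       Summable (fun k : ℕ × ℕ => (k.2 : ℝ) * zsummand w μ k)}

/-- `w` is exponentially bounded: `w(k) ≤ ξ^|k|` for some `ξ > 0`. -/
def ExpBounded (w : ℕ × ℕ → ℝ) : Prop := ∃ ξ : ℝ, 0 < ξ ∧ ∀ k : ℕ × ℕ, w k ≤ ξ ^ knorm k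

/-- The grand-canonical partition function `z(μ)`. -/
def zfun (w : ℕ × ℕ → ℝ) (μ : ℝ × ℝ) : ℝ := ∑' k : ℕ × ℕ, zsummand w μ k

/-- The pressure `p(μ) = log z(μ)`. -/
def press (w : ℕ × ℕ → ℝ) (μ : ℝ × ℝ) : ℝ := Real.log (zfun w μ)

/-- The single-site grand-canonical mass function `ν¹_μ(k) = w(k) exp(μ·k)/z(μ)`. -/
def nu1 (w : ℕ × ℕ → ℝ) (μ : ℝ × ℝ) (k : ℕ × ℕ) : ℝ := zsummand w μ k / zfun w μ

/-- Density of the first species `R₁(μ)`. -/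
def R1 (w : ℕ × ℕ → ℝ) (μ : ℝ × ℝ) : ℝ := ∑' k : ℕ × ℕ, (k.1 : ℝ) * nu1 w μ k

/-- Density of the second species `R₂(μ)`. -/
def R2 (w : ℕ × ℕ → ℝ) (μ : ℝ × ℝ) : ℝ := ∑' k : ℕ × ℕ, (k.2 : ℝ) * nu1 w μ k

/-- The density map `R(μ) = (R₁(μ), R₂(μ))`. -/
def Rmap (w : ℕ × ℕ → ℝ) (μ : ℝ × ℝ) : ℝ × ℝ := (R1 w μ, R2 w μ)

/-- Dot product of two real vectors. -/
def dotR (a b : ℝ × ℝ) : ℝ := a.1 * b.1 + a.2 * b.2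

/-!
Fix an integer `M ≥ C`. If `R₂(μ) ≤ C`, Markov's inequality gives `ν¹_μ(k₂ ≤ M) ≥ 1/(M+1)`, i.e.
`z(μ) ≤ (M+1) ∑_{k₂ ≤ M} w(k) e^{μ·k}`. Since `D_μ` is a lower set, `μ₁` may be lowered until the
`k₁`-direction decays like `e^{-k₁}` against `w(k) ≤ e^{a(k₁+k₂)}`; the truncated sum is then
`O(e^{(μ₂+a+1)M})`. On the other hand `z(μ) ≥ w(0,M+1) e^{μ₂(M+1)}`, so `e^{μ₂}` is bounded by a
constant independent of `μ`. Exchanging the two species gives the first coordinate.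
-/

theorem tsum_le_mul_tsum_indicator_of_tsum_natCast_mul_le {α : Type*} {f : α → ℝ} {n : α → ℕ}
    {C : ℝ} {M : ℕ} (hf : 0 ≤ f) (hfs : Summable f) (hnf : Summable fun a => (n a : ℝ) * f a)
    (hCM : C ≤ M) (h : ∑' a, (n a : ℝ) * f a ≤ C * ∑' a, f a) :
    ∑' a, f a ≤ (M + 1) * ∑' a, {a | n a ≤ M}.indicator f a := by
  have hind : Summable ({a | n a ≤ M}.indicator f) := hfs.indicator _
  have hpointwise (a : α) :
      (M + 1 : ℝ) * f a ≤ n a * f a + (M + 1) * {a | n a ≤ M}.indicator f a := by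
    by_cases ha : n a ≤ M
    · rw [indicator_of_mem (show a ∈ {a | n a ≤ M} from ha)]
      linarith [mul_nonneg (n a).cast_nonneg (hf a)]
    · have hMn : (M + 1 : ℝ) ≤ n a := by exact_mod_cast Nat.lt_of_not_le ha
      rw [indicator_of_notMem (show a ∉ {a | n a ≤ M} from ha), mul_zero, add_zero]
      exact mul_le_mul_of_nonneg_right hMn (hf a)
  have hsum := (hfs.mul_left ((M : ℝ) + 1)).tsum_le_tsum hpointwise
    (hnf.add (hind.mul_left ((M : ℝ) + 1)))
  rw [hfs.tsum_mul_left, hnf.tsum_add (hind.mul_left _), hind.tsum_mul_left] at hsum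
  have hCf := mul_le_mul_of_nonneg_right hCM (tsum_nonneg hf : 0 ≤ ∑' a, f a)
  linarith

theorem knorm_le_add (k : ℕ × ℕ) : knorm k ≤ k.1 + k.2 :=
  Real.sqrt_le_iff.2 ⟨by positivity, by nlinarith [(k.1.cast_nonneg : (0 : ℝ) ≤ k.1),
    (k.2.cast_nonneg : (0 : ℝ) ≤ k.2)]⟩

theorem ExpBounded.exists_le_exp {w : ℕ × ℕ → ℝ} (h : ExpBounded w) :
    ∃ a, 0 ≤ a ∧ ∀ k : ℕ × ℕ, w k ≤ exp (a * (k.1 + k.2)) := by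
  obtain ⟨ξ, hξ, hw⟩ := h
  refine ⟨max (log ξ) 0, le_max_right _ _, fun k => (hw k).trans ?_⟩
  rw [rpow_def_of_pos hξ]
  refine exp_le_exp.2 ?_
  calc log ξ * knorm k ≤ max (log ξ) 0 * knorm k :=
        mul_le_mul_of_nonneg_right (le_max_left _ _) (Real.sqrt_nonneg _)
    _ ≤ max (log ξ) 0 * (k.1 + k.2) :=
        mul_le_mul_of_nonneg_left (knorm_le_add k) (le_max_right _ _)

section Weights

variable {w : ℕ × ℕ → ℝ}

theorem zsummand_nonneg (hw : ∀ k, 0 ≤ w k) (μ : ℝ × ℝ) (k : ℕ × ℕ) : 0 ≤ zsummand w μ k :=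
  mul_nonneg (hw k) (exp_pos _).le

theorem zsummand_mono (hw : ∀ k, 0 ≤ w k) (k : ℕ × ℕ) : Monotone fun μ => zsummand w μ k := by
  intro μ ν hμν
  refine mul_le_mul_of_nonneg_left (exp_le_exp.2 ?_) (hw k)
  unfold dotNat
  nlinarith [hμν.1, hμν.2, (k.1.cast_nonneg : (0 : ℝ) ≤ k.1), (k.2.cast_nonneg : (0 : ℝ) ≤ k.2)]

theorem isLowerSet_Dmu (hw : ∀ k, 0 ≤ w k) : IsLowerSet (Dmu w) := by
  intro ν μ hμν ⟨h1, h2⟩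
  have hle (i : ℕ × ℕ → ℕ) (k : ℕ × ℕ) : (i k : ℝ) * zsummand w μ k ≤ i k * zsummand w ν k :=
    mul_le_mul_of_nonneg_left (zsummand_mono hw k hμν) (Nat.cast_nonneg _)
  have hnonneg (i : ℕ × ℕ → ℕ) (k : ℕ × ℕ) : 0 ≤ (i k : ℝ) * zsummand w μ k :=
    mul_nonneg (Nat.cast_nonneg _) (zsummand_nonneg hw μ k)
  exact ⟨h1.of_nonneg_of_le (hnonneg _) (hle Prod.fst), h2.of_nonneg_of_le (hnonneg _) (hle Prod.snd)⟩

theorem summable_zsummand_of_mem_Dmu (hw : ∀ k, 0 ≤ w k) {μ : ℝ × ℝ} (hμ : μ ∈ Dmu w) :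
    Summable (zsummand w μ) := by
  refine (hμ.1.add hμ.2).of_norm_bounded_eventually ?_
  filter_upwards [(finite_singleton ((0, 0) : ℕ × ℕ)).compl_mem_cofinite] with k hk
  have hk1 : (1 : ℝ) ≤ k.1 + k.2 := by
    obtain ⟨a, b⟩ := k
    have : 1 ≤ a + b := by simp only [mem_compl_iff, mem_singleton_iff, Prod.mk.injEq] at hk; omega
    exact_mod_cast this
  rw [Real.norm_of_nonneg (zsummand_nonneg hw μ k), ← add_mul]
  exact le_mul_of_one_le_left (zsummand_nonneg hw μ k) hk1

theorem zfun_pos (hw : ∀ k, 0 < w k) {μ : ℝ × ℝ} (hμ : Summable (zsummand w μ)) :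
    0 < zfun w μ :=
  hμ.tsum_pos (zsummand_nonneg (fun k => (hw k).le) μ) (0, 0) (mul_pos (hw _) (exp_pos _))

theorem R2_eq_tsum_div (μ : ℝ × ℝ) :
    R2 w μ = (∑' k : ℕ × ℕ, (k.2 : ℝ) * zsummand w μ k) / zfun w μ := by
  simp only [R2, nu1, ← mul_div_assoc, tsum_div_const]

theorem zsummand_le_exp {a : ℝ} (hwa : ∀ k : ℕ × ℕ, w k ≤ exp (a * (k.1 + k.2)))
    (μ : ℝ × ℝ) (k : ℕ × ℕ) :
    zsummand w μ k ≤ exp ((μ.1 + a) * k.1 + (μ.2 + a) * k.2) :=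
  calc zsummand w μ k ≤ exp (a * (k.1 + k.2)) * exp (dotNat μ k) :=
        mul_le_mul_of_nonneg_right (hwa k) (exp_pos _).le
    _ = _ := by rw [← exp_add, dotNat]; ring_nf

theorem tsum_indicator_zsummand_le {a : ℝ} (hw : ∀ k, 0 ≤ w k)
    (hwa : ∀ k : ℕ × ℕ, w k ≤ exp (a * (k.1 + k.2))) {μ : ℝ × ℝ} (h1 : μ.1 + a ≤ -1)
    (h2 : 0 ≤ μ.2 + a) (M : ℕ) :
    ∑' k, {k : ℕ × ℕ | k.2 ≤ M}.indicator (zsummand w μ) k ≤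
      exp ((μ.2 + a + 1) * M) * ∑' k : ℕ × ℕ, exp (-k.1) * exp (-k.2) := by
  have hE : Summable fun k : ℕ × ℕ => exp (-k.1) * exp (-k.2) :=
    summable_exp_neg_nat.mul_of_nonneg summable_exp_neg_nat (fun _ => (exp_pos _).le)
      (fun _ => (exp_pos _).le)
  have hle (k : ℕ × ℕ) : {k : ℕ × ℕ | k.2 ≤ M}.indicator (zsummand w μ) k ≤
      exp ((μ.2 + a + 1) * M) * (exp (-k.1) * exp (-k.2)) := by
    by_cases hk : k.2 ≤ M
    · rw [indicator_of_mem (show k ∈ {k : ℕ × ℕ | k.2 ≤ M} from hk), ← exp_add, ← exp_add]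
      refine (zsummand_le_exp hwa μ k).trans (exp_le_exp.2 ?_)
      have hkM : (k.2 : ℝ) ≤ M := by exact_mod_cast hk
      nlinarith [(k.1.cast_nonneg : (0 : ℝ) ≤ k.1)]
    · rw [indicator_of_notMem (show k ∉ {k : ℕ × ℕ | k.2 ≤ M} from hk)]
      positivity
  have hind : Summable ({k : ℕ × ℕ | k.2 ≤ M}.indicator (zsummand w μ)) :=
    (hE.mul_left _).of_nonneg_of_le (indicator_nonneg fun k _ => zsummand_nonneg hw μ k) hle
  rw [← hE.tsum_mul_left]
  exact hind.tsum_le_tsum hle (hE.mul_left _)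

theorem bddAbove_snd_Dmu_of_R2_le (hw : ∀ k, 0 < w k) (hexp : ExpBounded w) {C : ℝ}
    (hC : ∀ μ ∈ Dmu w, R2 w μ ≤ C) :
    BddAbove {y : ℝ | ∃ x : ℝ, (x, y) ∈ Dmu w} := by
  have hw₀ (k : ℕ × ℕ) : 0 ≤ w k := (hw k).le
  obtain ⟨a, ha, hwa⟩ := hexp.exists_le_exp
  set M := ⌈C⌉₊
  set E := ∑' k : ℕ × ℕ, exp (-k.1) * exp (-k.2)
  have hE : 0 ≤ E := tsum_nonneg fun _ => by positivity
  refine ⟨(M + 1) * exp ((a + 1) * M) * E / w (0, M + 1), ?_⟩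
  rintro y ⟨x, hxy⟩
  rcases le_or_gt y 0 with hy | hy
  · exact hy.trans (div_nonneg (by positivity) (hw _).le)
  set μ : ℝ × ℝ := (min x (-a - 1), y)
  have hμ : μ ∈ Dmu w := isLowerSet_Dmu hw₀ (show μ ≤ (x, y) from ⟨min_le_left _ _, le_rfl⟩) hxy
  have hz := summable_zsummand_of_mem_Dmu hw₀ hμ
  have hmean : ∑' k : ℕ × ℕ, (k.2 : ℝ) * zsummand w μ k ≤ C * zfun w μ := by
    have := hC μ hμ
    rwa [R2_eq_tsum_div, div_le_iff₀ (zfun_pos hw hz)] at this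
  have hmarkov : zfun w μ ≤ (M + 1) * ∑' k, {k : ℕ × ℕ | k.2 ≤ M}.indicator (zsummand w μ) k :=
    tsum_le_mul_tsum_indicator_of_tsum_natCast_mul_le (zsummand_nonneg hw₀ μ) hz hμ.2
      (Nat.le_ceil C) hmean
  have htrunc := tsum_indicator_zsummand_le hw₀ hwa (μ := μ)
    (by linarith [min_le_right x (-a - 1)]) (by dsimp [μ]; linarith) M
  have hlower : w (0, M + 1) * exp (y * (M + 1)) ≤ zfun w μ :=
    calc w (0, M + 1) * exp (y * (M + 1)) = zsummand w μ (0, M + 1) := by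
          simp [zsummand, dotNat, μ]
      _ ≤ zfun w μ := hz.le_tsum (0, M + 1) fun k _ => zsummand_nonneg hw₀ μ k
  have hexpy : w (0, M + 1) * exp y ≤ (M + 1) * exp ((a + 1) * M) * E := by
    have hchain := hlower.trans (hmarkov.trans (mul_le_mul_of_nonneg_left htrunc (by positivity)))
    have hsplit : exp (y * (M + 1)) = exp y * exp (y * M) := by rw [← exp_add]; ring_nf
    have hsplit' : exp ((y + a + 1) * M) = exp (y * M) * exp ((a + 1) * M) := by
      rw [← exp_add]; ring_nf
    rw [hsplit, hsplit'] at hchain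
    nlinarith [exp_pos (y * M)]
  rw [le_div_iff₀ (hw _)]
  nlinarith [add_one_le_exp y, hw (0, M + 1)]

end Weights

section Swap

variable (w : ℕ × ℕ → ℝ)

theorem zsummand_comp_swap (μ : ℝ × ℝ) (k : ℕ × ℕ) :
    zsummand (w ∘ Prod.swap) μ.swap k = zsummand w μ k.swap := by
  simp only [zsummand, dotNat, Function.comp_apply, Prod.fst_swap, Prod.snd_swap, add_comm]

theorem swap_mem_Dmu_comp_swap_iff (μ : ℝ × ℝ) :
    μ.swap ∈ Dmu (w ∘ Prod.swap) ↔ μ ∈ Dmu w := by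
  simp only [Dmu, mem_ofPred_eq, zsummand_comp_swap]
  exact and_comm.trans <| and_congr
    ((Equiv.prodComm ℕ ℕ).summable_iff (f := fun k : ℕ × ℕ => (k.1 : ℝ) * zsummand w μ k))
    ((Equiv.prodComm ℕ ℕ).summable_iff (f := fun k : ℕ × ℕ => (k.2 : ℝ) * zsummand w μ k))

theorem zfun_comp_swap (μ : ℝ × ℝ) : zfun (w ∘ Prod.swap) μ.swap = zfun w μ := by
  simp only [zfun, zsummand_comp_swap]
  exact (Equiv.prodComm ℕ ℕ).tsum_eq (zsummand w μ)

theorem R2_comp_swap (μ : ℝ × ℝ) : R2 (w ∘ Prod.swap) μ.swap = R1 w μ := by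
  simp only [R2, R1, nu1, zsummand_comp_swap, zfun_comp_swap]
  exact (Equiv.prodComm ℕ ℕ).tsum_eq fun k : ℕ × ℕ => (k.1 : ℝ) * (zsummand w μ k / zfun w μ)

theorem ExpBounded.comp_swap {w : ℕ × ℕ → ℝ} (h : ExpBounded w) : ExpBounded (w ∘ Prod.swap) := by
  obtain ⟨ξ, hξ, hw⟩ := h
  refine ⟨ξ, hξ, fun k => ?_⟩
  simpa only [knorm, Function.comp_apply, Prod.fst_swap, Prod.snd_swap, add_comm] using hw k.swap

end Swap

theorem bddAbove_fst_Dmu_of_R1_le {w : ℕ × ℕ → ℝ} (hw : ∀ k, 0 < w k) (hexp : ExpBounded w)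
    {C : ℝ} (hC : ∀ μ ∈ Dmu w, R1 w μ ≤ C) :
    BddAbove {x : ℝ | ∃ y : ℝ, (x, y) ∈ Dmu w} := by
  have hset : {x : ℝ | ∃ y : ℝ, (x, y) ∈ Dmu w} =
      {x : ℝ | ∃ y : ℝ, (y, x) ∈ Dmu (w ∘ Prod.swap)} := by
    ext x
    exact exists_congr fun y => (swap_mem_Dmu_comp_swap_iff w (x, y)).symm
  rw [hset]
  refine bddAbove_snd_Dmu_of_R2_le (fun k => hw k.swap) hexp.comp_swap (C := C) fun μ hμ => ?_
  rw [← Prod.swap_swap μ, R2_comp_swap]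
  exact hC _ ((swap_mem_Dmu_comp_swap_iff w μ.swap).1 (by rwa [Prod.swap_swap]))

/-- If the density of one species is bounded on `D_μ`, then `D_μ` is
bounded above in the corresponding chemical-potential coordinate (both species). -/
theorem statement8 (w : ℕ × ℕ → ℝ) (hw : ∀ k, 0 < w k) (hexp : ExpBounded w) :
    ((∃ C : ℝ, 0 ≤ C ∧ ∀ μ ∈ Dmu w, R2 w μ ≤ C) →
      BddAbove {y : ℝ | ∃ x : ℝ, (x, y) ∈ Dmu w}) ∧
    ((∃ C : ℝ, 0 ≤ C ∧ ∀ μ ∈ Dmu w, R1 w μ ≤ C) →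
      BddAbove {x : ℝ | ∃ y : ℝ, (x, y) ∈ Dmu w}) :=
  ⟨fun ⟨_, _, hC⟩ => bddAbove_snd_Dmu_of_R2_le hw hexp hC,
    fun ⟨_, _, hC⟩ => bddAbove_fst_Dmu_of_R1_le hw hexp hC⟩
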